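/- No-Cycle Lemma: Let H be a directed multigraph on the vertices of G representing pebbling moves (each directed edge from the vertex losing two pebbles to the vertex gaining one). If H is orderable under a distribution D (i.e., some linear ordering of its edges is a valid pebbling sequence from D), then H has an acyclic subgraph H' that is orderable under D and gives each vertex balance at least as large as H does, where the balance of v is d⁻(v) + D(v) − 2d⁺(v). -/
import Mathlib


open SimpleGraph

variable {V : Type*}

/-- Apply a pebbling move along the ordered pair `e`. -/
def applyMove [DecidableEq V] (D : V → ℕ) (e : V × V) : V → ℕ :=
  fun w => if w = e.1 then D w - 2 else if w = e.2 then D w + 1 else D w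

/-- A list of ordered pairs is a valid pebbling sequence from `D`. -/
def ValidSeq [DecidableEq V] (G : SimpleGraph V) : (V → ℕ) → List (V × V) → Prop
  | _, [] => True
  | D, e :: l => G.Adj e.1 e.2 ∧ 2 ≤ D e.1 ∧ ValidSeq G (applyMove D e) l

def applySeq [DecidableEq V] (D : V → ℕ) : List (V × V) → (V → ℕ)
  | [] => D
  | e :: l => applySeq (applyMove D e) l

/-- `r` is `m`-reachable under `D`. -/
def Reaches [DecidableEq V] (G : SimpleGraph V) (D : V → ℕ) (r : V) (m : ℕ) : Prop :=
  ∃ l : List (V × V), ValidSeq G D l ∧ m ≤ applySeq D l r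

def Solvable [DecidableEq V] (G : SimpleGraph V) (D : V → ℕ) : Prop :=
  ∀ r : V, Reaches G D r 1

noncomputable def pebNumTo [Fintype V] [DecidableEq V] (G : SimpleGraph V) (r : V) : ℕ :=
  sInf {k : ℕ | ∀ D : V → ℕ, (∑ v, D v) = k → Reaches G D r 1}

noncomputable def pebNum [Fintype V] [DecidableEq V] (G : SimpleGraph V) : ℕ :=
  sInf {k : ℕ | ∀ D : V → ℕ, (∑ v, D v) = k → Solvable G D}

noncomputable def optPebNum [Fintype V] [DecidableEq V] (G : SimpleGraph V) : ℕ :=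
  sInf {k : ℕ | ∃ D : V → ℕ, (∑ v, D v) = k ∧ Solvable G D}

/-- A directed multigraph of moves is orderable under `D` if some linear ordering of
its edges is a valid pebbling sequence from `D`. -/
def Orderable [DecidableEq V] (G : SimpleGraph V) (D : V → ℕ) (H : Multiset (V × V)) : Prop :=
  ∃ l : List (V × V), (l : Multiset (V × V)) = H ∧ ValidSeq G D l

/-- The multigraph `H` contains a directed cycle (counting multiplicities). -/
def HasDicycle [DecidableEq V] (H : Multiset (V × V)) : Prop :=
  ∃ n : ℕ, ∃ f : Fin (n + 1) → V × V,
    (Finset.univ.val.map f) ≤ H ∧ ∀ i : Fin (n + 1), (f i).2 = (f (i + 1)).1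

/-- The balance of `v`: indegree plus initial pebbles minus twice the outdegree. -/
def balance [DecidableEq V] (D : V → ℕ) (H : Multiset (V × V)) (v : V) : ℤ :=
  (H.countP (fun e => e.2 = v) : ℤ) + (D v : ℤ) - 2 * (H.countP (fun e => e.1 = v) : ℤ)

section NoCycleAux

variable [DecidableEq V] (G : SimpleGraph V)

private lemma sum_countP_fst (A : Finset V) :
    ∀ P : Multiset (V × V), (∀ e ∈ P, e.1 ∈ A) →
      ∑ v ∈ A, P.countP (fun e => e.1 = v) = Multiset.card P := by
  intro P
  induction P using Multiset.induction_on with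
  | empty => intro _; simp
  | cons a s ih =>
    intro h
    have ha : a.1 ∈ A := h a (Multiset.mem_cons_self a s)
    have hs : ∀ e ∈ s, e.1 ∈ A := fun e he => h e (Multiset.mem_cons_of_mem he)
    simp only [Multiset.countP_cons, Finset.sum_add_distrib, ih hs, Multiset.card_cons]
    rw [Finset.sum_ite_eq A a.1 (fun _ => 1), if_pos ha]

private lemma sum_countP_snd (A : Finset V) :
    ∀ P : Multiset (V × V), (∀ e ∈ P, e.2 ∈ A) →
      ∑ v ∈ A, P.countP (fun e => e.2 = v) = Multiset.card P := by
  intro P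
  induction P using Multiset.induction_on with
  | empty => intro _; simp
  | cons a s ih =>
    intro h
    have ha : a.2 ∈ A := h a (Multiset.mem_cons_self a s)
    have hs : ∀ e ∈ s, e.2 ∈ A := fun e he => h e (Multiset.mem_cons_of_mem he)
    simp only [Multiset.countP_cons, Finset.sum_add_distrib, ih hs, Multiset.card_cons]
    rw [Finset.sum_ite_eq A a.2 (fun _ => 1), if_pos ha]

/-- The flush lemma: if pending moves `P` cover the deficit `F` in the sense of the
invariant, then some sub-list of `P` can be validly executed, landing above `F`. -/
private lemma flush_lemma (F : V → ℕ) (P : Multiset (V × V)) :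
    ∀ D' : V → ℕ, (∀ e ∈ P, G.Adj e.1 e.2) →
      (∀ v, F v + 2 * P.countP (fun e => e.1 = v) ≤ D' v + P.countP (fun e => e.2 = v)) →
      ∃ l : List (V × V), (l : Multiset (V × V)) ≤ P ∧ ValidSeq G D' l ∧
        ∀ v, F v ≤ applySeq D' l v := by
  induction P using Multiset.strongInductionOn with
  | _ P ih =>
    intro D' hPadj hinv
    by_cases hex : ∃ e ∈ P, 2 ≤ D' e.1
    · obtain ⟨e, heP, h2⟩ := hex
      have hadj := hPadj e heP
      have hne : e.1 ≠ e.2 := hadj.ne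
      have hlt : P.erase e < P := Multiset.erase_lt.mpr heP
      have hadj' : ∀ x ∈ P.erase e, G.Adj x.1 x.2 :=
        fun x hx => hPadj x (Multiset.mem_of_mem_erase hx)
      have hinv' : ∀ v, F v + 2 * (P.erase e).countP (fun x => x.1 = v) ≤
          applyMove D' e v + (P.erase e).countP (fun x => x.2 = v) := by
        intro v
        have h := hinv v
        rw [← Multiset.cons_erase heP, Multiset.countP_cons, Multiset.countP_cons] at h
        by_cases h1 : e.1 = v <;> by_cases hs2 : e.2 = v
        · exact absurd (h1.trans hs2.symm) hne
        · subst h1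
          simp only [applyMove, eq_self_iff_true, if_true, if_neg hs2] at h ⊢
          omega
        · subst hs2
          simp only [applyMove, if_neg (Ne.symm hne), if_neg h1, eq_self_iff_true,
            if_true] at h ⊢
          omega
        · simp only [applyMove, if_neg (Ne.symm h1), if_neg (Ne.symm hs2), if_neg h1,
            if_neg hs2] at h ⊢
          omega
      obtain ⟨l, hl, hv, hfin⟩ := ih (P.erase e) hlt (applyMove D' e) hadj' hinv'
      refine ⟨e :: l, ?_, ⟨hadj, h2, hv⟩, fun v => hfin v⟩
      rw [← Multiset.cons_coe, ← Multiset.cons_erase heP]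
      exact Multiset.cons_le_cons e hl
    · push_neg at hex
      have hout_in : ∀ v, P.countP (fun e => e.1 = v) ≤ P.countP (fun e => e.2 = v) := by
        intro v
        rcases Nat.eq_zero_or_pos (P.countP (fun e => e.1 = v)) with h0 | hpos
        · rw [h0]; exact Nat.zero_le _
        · obtain ⟨e, heP, he1⟩ := Multiset.countP_pos.mp hpos
          have hD := hex e heP
          rw [he1] at hD
          have h := hinv v
          omega
      set A : Finset V := P.toFinset.image Prod.fst ∪ P.toFinset.image Prod.snd with hA
      have hfst : ∀ e ∈ P, e.1 ∈ A := fun e he =>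
        Finset.mem_union_left _ (Finset.mem_image_of_mem _ (Multiset.mem_toFinset.mpr he))
      have hsnd : ∀ e ∈ P, e.2 ∈ A := fun e he =>
        Finset.mem_union_right _ (Finset.mem_image_of_mem _ (Multiset.mem_toFinset.mpr he))
      have hs1 := sum_countP_fst A P hfst
      have hs2 := sum_countP_snd A P hsnd
      have hpt : ∀ v ∈ A, P.countP (fun e => e.1 = v) = P.countP (fun e => e.2 = v) :=
        (Finset.sum_eq_sum_iff_of_le (fun v _ => hout_in v)).mp (hs1.trans hs2.symm)
      have heq : ∀ v, P.countP (fun e => e.1 = v) = P.countP (fun e => e.2 = v) := by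
        intro v
        by_cases hv : v ∈ A
        · exact hpt v hv
        · have h1 : P.countP (fun e => e.1 = v) = 0 := by
            by_contra hcon
            obtain ⟨e, heP, he⟩ := Multiset.countP_pos.mp (Nat.pos_of_ne_zero hcon)
            exact hv (he ▸ hfst e heP)
          have h2 : P.countP (fun e => e.2 = v) = 0 := by
            by_contra hcon
            obtain ⟨e, heP, he⟩ := Multiset.countP_pos.mp (Nat.pos_of_ne_zero hcon)
            exact hv (he ▸ hsnd e heP)
          rw [h1, h2]
      refine ⟨[], by simp, trivial, ?_⟩
      intro v
      have h := hinv v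
      rw [heq v] at h
      show F v ≤ D' v
      omega

/-- The grand lemma: execute `l`, skipping the planned sub-multiset `c` and pending
moves that are not currently executable. -/
private lemma grand_lemma :
    ∀ (l : List (V × V)) (D D' : V → ℕ) (c P : Multiset (V × V)),
      ValidSeq G D l → c ≤ (l : Multiset (V × V)) → (∀ e ∈ P, G.Adj e.1 e.2) →
      (∀ v, D v + c.countP (fun e => e.2 = v) + 2 * P.countP (fun e => e.1 = v)
          ≤ D' v + c.countP (fun e => e.1 = v) + P.countP (fun e => e.2 = v)) →
      ∃ l' : List (V × V), ValidSeq G D' l' ∧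
        ((l' : Multiset (V × V)) + c ≤ P + (l : Multiset (V × V))) ∧
        ∀ v, applySeq D l v ≤ applySeq D' l' v := by
  intro l
  induction l with
  | nil =>
    intro D D' c P hval hc hPadj hinv
    have hc0 : c = 0 := Multiset.le_zero.mp (by simpa using hc)
    subst hc0
    obtain ⟨l'', h1, h2, h3⟩ := flush_lemma G D P D' hPadj
      (by intro v; have := hinv v; simpa using this)
    exact ⟨l'', h2, by simpa using h1, fun v => h3 v⟩
  | cons e t ih =>
    intro D D' c P hval hc hPadj hinv
    obtain ⟨hadj, h2, hvt⟩ := hval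
    have hne : e.1 ≠ e.2 := hadj.ne
    by_cases hec : e ∈ c
    · -- skip a planned removal
      have hct : c.erase e ≤ (t : Multiset (V × V)) := by
        have h := Multiset.erase_le_erase e hc
        rwa [← Multiset.cons_coe, Multiset.erase_cons_head] at h
      have hinv' : ∀ v, applyMove D e v + (c.erase e).countP (fun x => x.2 = v)
          + 2 * P.countP (fun x => x.1 = v)
          ≤ D' v + (c.erase e).countP (fun x => x.1 = v) + P.countP (fun x => x.2 = v) := by
        intro v
        have h := hinv v
        rw [← Multiset.cons_erase hec, Multiset.countP_cons, Multiset.countP_cons] at h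
        by_cases h1 : e.1 = v <;> by_cases hs2 : e.2 = v
        · exact absurd (h1.trans hs2.symm) hne
        · subst h1
          simp only [applyMove, eq_self_iff_true, if_true, if_neg hs2] at h ⊢
          omega
        · subst hs2
          simp only [applyMove, if_neg (Ne.symm hne), if_neg h1, eq_self_iff_true,
            if_true] at h ⊢
          omega
        · simp only [applyMove, if_neg (Ne.symm h1), if_neg (Ne.symm hs2), if_neg h1,
            if_neg hs2] at h ⊢
          omega
      obtain ⟨l', hv', hle', hfin'⟩ := ih (applyMove D e) D' (c.erase e) P hvt hct hPadj hinv'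
      refine ⟨l', hv', ?_, fun v => hfin' v⟩
      have hrw : ((l' : Multiset (V × V)) + c) = e ::ₘ ((l' : Multiset (V × V)) + c.erase e) := by
        conv_lhs => rw [← Multiset.cons_erase hec]
        rw [Multiset.add_cons]
      rw [hrw, ← Multiset.cons_coe, Multiset.add_cons]
      exact Multiset.cons_le_cons e hle'
    · have hct : c ≤ (t : Multiset (V × V)) := by
        rw [Multiset.le_iff_count] at hc ⊢
        intro a
        have h := hc a
        rw [← Multiset.cons_coe, Multiset.count_cons] at h
        by_cases hae : a = e
        · subst hae
          simp [Multiset.count_eq_zero_of_notMem hec]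
        · simpa [hae] using h
      by_cases hD' : 2 ≤ D' e.1
      · -- both worlds execute e
        have hinv' : ∀ v, applyMove D e v + c.countP (fun x => x.2 = v)
            + 2 * P.countP (fun x => x.1 = v)
            ≤ applyMove D' e v + c.countP (fun x => x.1 = v) + P.countP (fun x => x.2 = v) := by
          intro v
          have h := hinv v
          by_cases h1 : e.1 = v <;> by_cases hs2 : e.2 = v
          · exact absurd (h1.trans hs2.symm) hne
          · subst h1
            simp only [applyMove, eq_self_iff_true, if_true]
            omega
          · subst hs2
            simp only [applyMove, if_neg (Ne.symm hne), eq_self_iff_true, if_true]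
            omega
          · simp only [applyMove, if_neg (Ne.symm h1), if_neg (Ne.symm hs2)]
            omega
        obtain ⟨l', hv', hle', hfin'⟩ := ih (applyMove D e) (applyMove D' e) c P hvt hct hPadj hinv'
        refine ⟨e :: l', ⟨hadj, hD', hv'⟩, ?_, fun v => hfin' v⟩
        rw [← Multiset.cons_coe, ← Multiset.cons_coe, Multiset.cons_add, Multiset.add_cons]
        exact Multiset.cons_le_cons e hle'
      · -- pend e
        have hPadj' : ∀ x ∈ (e ::ₘ P), G.Adj x.1 x.2 := by
          intro x hx
          rcases Multiset.mem_cons.mp hx with rfl | hx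
          · exact hadj
          · exact hPadj x hx
        have hinv' : ∀ v, applyMove D e v + c.countP (fun x => x.2 = v)
            + 2 * (e ::ₘ P).countP (fun x => x.1 = v)
            ≤ D' v + c.countP (fun x => x.1 = v) + (e ::ₘ P).countP (fun x => x.2 = v) := by
          intro v
          have h := hinv v
          rw [Multiset.countP_cons, Multiset.countP_cons]
          by_cases h1 : e.1 = v <;> by_cases hs2 : e.2 = v
          · exact absurd (h1.trans hs2.symm) hne
          · subst h1
            simp only [applyMove, eq_self_iff_true, if_true, if_neg hs2]
            omega
          · subst hs2
            simp only [applyMove, if_neg (Ne.symm hne), if_neg h1, eq_self_iff_true, if_true]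
            omega
          · simp only [applyMove, if_neg (Ne.symm h1), if_neg (Ne.symm hs2), if_neg h1,
              if_neg hs2]
            omega
        obtain ⟨l', hv', hle', hfin'⟩ := ih (applyMove D e) D' c (e ::ₘ P) hvt hct hPadj' hinv'
        refine ⟨l', hv', ?_, fun v => hfin' v⟩
        rw [← Multiset.cons_coe, Multiset.add_cons]
        rwa [Multiset.cons_add] at hle'

private lemma applySeq_eq_balance :
    ∀ (l : List (V × V)) (D : V → ℕ), ValidSeq G D l →
      ∀ v, (applySeq D l v : ℤ) = balance D (l : Multiset (V × V)) v := by
  intro l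
  induction l with
  | nil =>
    intro D _ v
    show (D v : ℤ) = _
    simp [balance]
  | cons e t ih =>
    intro D h v
    obtain ⟨hadj, h2, hvt⟩ := h
    have hne : e.1 ≠ e.2 := hadj.ne
    have hrec := ih (applyMove D e) hvt v
    show (applySeq (applyMove D e) t v : ℤ) = _
    rw [hrec]
    unfold balance
    rw [← Multiset.cons_coe, Multiset.countP_cons, Multiset.countP_cons]
    by_cases h1 : e.1 = v <;> by_cases hs2 : e.2 = v
    · exact absurd (h1.trans hs2.symm) hne
    · subst h1
      simp only [applyMove, eq_self_iff_true, if_true, if_neg hs2]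
      rw [Nat.cast_sub h2]
      push_cast
      ring
    · subst hs2
      simp only [applyMove, if_neg (Ne.symm hne), if_neg h1, eq_self_iff_true, if_true]
      push_cast
      ring
    · simp only [applyMove, if_neg (Ne.symm h1), if_neg (Ne.symm hs2), if_neg h1, if_neg hs2]
      push_cast
      ring

private lemma eulerian_of_hasDicycle {H : Multiset (V × V)} (h : HasDicycle H) :
    ∃ c : Multiset (V × V), c ≤ H ∧ c ≠ 0 ∧
      ∀ v, c.countP (fun e => e.2 = v) = c.countP (fun e => e.1 = v) := by
  obtain ⟨n, f, hle, hcyc⟩ := h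
  refine ⟨Finset.univ.val.map f, hle, ?_, ?_⟩
  · intro h0
    have hcard : Multiset.card (Multiset.map f Finset.univ.val) = n + 1 := by
      rw [Multiset.card_map]
      simp
    rw [h0] at hcard
    simp at hcard
  · intro v
    rw [Multiset.countP_map, Multiset.countP_map]
    show (Finset.univ.filter (fun i => (f i).2 = v)).card
        = (Finset.univ.filter (fun i => (f i).1 = v)).card
    refine Finset.card_bij' (fun i _ => i + 1) (fun j _ => j - 1) ?_ ?_ ?_ ?_
    · intro i hi
      rw [Finset.mem_filter] at hi ⊢
      exact ⟨Finset.mem_univ _, by rw [← hcyc i]; exact hi.2⟩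
    · intro j hj
      rw [Finset.mem_filter] at hj ⊢
      refine ⟨Finset.mem_univ _, ?_⟩
      rw [hcyc (j - 1), sub_add_cancel]
      exact hj.2
    · intro i _
      exact add_sub_cancel_right i 1
    · intro j _
      exact sub_add_cancel j 1

end NoCycleAux

theorem no_cycle_lemma [DecidableEq V] (G : SimpleGraph V) (D : V → ℕ)
    (H : Multiset (V × V)) (hH : Orderable G D H) :
    ∃ H' : Multiset (V × V), H' ≤ H ∧ ¬ HasDicycle H' ∧ Orderable G D H' ∧
      ∀ v : V, balance D H v ≤ balance D H' v := by
  have main : ∀ (n : ℕ) (H : Multiset (V × V)), Multiset.card H ≤ n → Orderable G D H →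
      ∃ H' : Multiset (V × V), H' ≤ H ∧ ¬ HasDicycle H' ∧ Orderable G D H' ∧
        ∀ v : V, balance D H v ≤ balance D H' v := by
    intro n
    induction n with
    | zero =>
      intro H hcard hH
      have hH0 : H = 0 := Multiset.card_eq_zero.mp (Nat.le_zero.mp hcard)
      refine ⟨H, le_rfl, ?_, hH, fun v => le_rfl⟩
      intro hdc
      obtain ⟨c, hle, hne0, _⟩ := eulerian_of_hasDicycle hdc
      rw [hH0] at hle
      exact hne0 (Multiset.le_zero.mp hle)
    | succ n ihn =>
      intro H hcard hH
      by_cases hdc : HasDicycle H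
      · obtain ⟨c, hcH, hc0, heul⟩ := eulerian_of_hasDicycle hdc
        obtain ⟨l, hlH, hlval⟩ := hH
        have hcl : c ≤ (l : Multiset (V × V)) := by rw [hlH]; exact hcH
        obtain ⟨l', hv', hle', hfin'⟩ := grand_lemma G l D D c 0 hlval hcl (by simp)
          (by intro v; simp [heul v])
        have hle2 : (l' : Multiset (V × V)) + c ≤ H := by
          rw [← hlH]
          simpa using hle'
        have hl'H : (l' : Multiset (V × V)) ≤ H :=
          le_trans (Multiset.le_add_right _ _) hle2
        have hcard' : Multiset.card (l' : Multiset (V × V)) ≤ n := by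
          have h1 := Multiset.card_le_card hle2
          rw [Multiset.card_add] at h1
          have hcp : 0 < Multiset.card c := Multiset.card_pos.mpr hc0
          omega
        obtain ⟨H', h1', h2', h3', h4'⟩ := ihn (l' : Multiset (V × V)) hcard' ⟨l', rfl, hv'⟩
        refine ⟨H', le_trans h1' hl'H, h2', h3', ?_⟩
        intro v
        have e1 := applySeq_eq_balance G l D hlval v
        have e2 := applySeq_eq_balance G l' D hv' v
        have hb : balance D H v ≤ balance D (l' : Multiset (V × V)) v := by
          rw [← hlH, ← e1, ← e2]
          exact_mod_cast hfin' v
        exact le_trans hb (h4' v)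
      · exact ⟨H, le_rfl, hdc, hH, fun v => le_rfl⟩
  exact main (Multiset.card H) H le_rfl hH
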